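/- Let φ ∈ (1/2, 1) and σ > 0. Then σ·Φ⁻¹(φ) > √(πσ²/2)·(2φ - 1), i.e. the certified radius σΦ⁻¹(φ) of the proposed method strictly exceeds the Smoothed Embeddings radius √(πσ²/2)·(2φ - 1) expressed in terms of the same margin quantity. -/

import Mathlib

open MeasureTheory ProbabilityTheory

/-- The isotropic Gaussian measure `N(0, σ²I)` on `ℝⁿ` (as `EuclideanSpace`). -/
noncomputable def gaussMeasure (n : ℕ) (σ : ℝ) : Measure (EuclideanSpace ℝ (Fin n)) :=
  (Measure.pi fun _ : Fin n => gaussianReal 0 (σ ^ 2).toNNReal).map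
    (EuclideanSpace.equiv (Fin n) ℝ).symm

/-- The standard Gaussian cumulative distribution function `Φ`. -/
noncomputable def stdGaussCDF : ℝ → ℝ := fun t => cdf (gaussianReal 0 1) t

/-- The inverse `Φ⁻¹` of the standard Gaussian CDF. -/
noncomputable def stdGaussCDFInv : ℝ → ℝ := Function.invFun stdGaussCDF

/-! For `t > 0`, `Φ t - 1/2 = ∫₀ᵗ Φ'` and the Gaussian density is strictly below its peak value
`Φ' 0 = 1/√(2π)` away from `0`, so `Φ t < 1/2 + t/√(2π)`. At `t = √(π/2)·(2φ - 1)` the right-hand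
side is exactly `φ`, hence `Φ t < φ`, i.e. `t < Φ⁻¹ φ` since `Φ` is strictly increasing; multiply
by `σ`. -/

open Set Real
open scoped NNReal

namespace ProbabilityTheory

variable {m : ℝ} {v : ℝ≥0}

lemma gaussianPDFReal_lt_gaussianPDFReal_self (hv : v ≠ 0) {x : ℝ} (hx : x ≠ m) :
    gaussianPDFReal m v x < gaussianPDFReal m v m := by
  simp only [gaussianPDFReal_def, sub_self]
  gcongr _ * rexp ?_
  rw [zero_pow two_ne_zero, neg_zero, zero_div, neg_div, neg_lt_zero]
  positivity

lemma gaussianPDFReal_le_gaussianPDFReal_self {x : ℝ} :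
    gaussianPDFReal m v x ≤ gaussianPDFReal m v m := by
  simp only [gaussianPDFReal_def, sub_self]
  gcongr _ * rexp ?_
  rw [zero_pow two_ne_zero, neg_zero, zero_div, neg_div, neg_nonpos]
  positivity

lemma cdf_gaussianReal_eq_setIntegral (hv : v ≠ 0) (t : ℝ) :
    cdf (gaussianReal m v) t = ∫ x in Iic t, gaussianPDFReal m v x := by
  rw [cdf_eq_real, measureReal_def, gaussianReal_apply_eq_integral m hv,
    ENNReal.toReal_ofReal (setIntegral_nonneg measurableSet_Iic fun x _ ↦
      gaussianPDFReal_nonneg m v x)]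

lemma cdf_gaussianReal_sub_cdf_gaussianReal (hv : v ≠ 0) (a b : ℝ) :
    cdf (gaussianReal m v) b - cdf (gaussianReal m v) a
      = ∫ x in a..b, gaussianPDFReal m v x := by
  rw [cdf_gaussianReal_eq_setIntegral hv, cdf_gaussianReal_eq_setIntegral hv,
    intervalIntegral.integral_Iic_sub_Iic (integrable_gaussianPDFReal m v).integrableOn
      (integrable_gaussianPDFReal m v).integrableOn]

lemma strictMono_cdf_gaussianReal (hv : v ≠ 0) : StrictMono (cdf (gaussianReal m v)) := by
  intro a b hab
  rw [← sub_pos, cdf_gaussianReal_sub_cdf_gaussianReal hv]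
  exact intervalIntegral.intervalIntegral_pos_of_pos
    (integrable_gaussianPDFReal m v).intervalIntegrable (gaussianPDFReal_pos m v · hv) hab

lemma continuous_cdf_gaussianReal (hv : v ≠ 0) : Continuous (cdf (gaussianReal m v)) := by
  have h : cdf (gaussianReal m v)
      = fun t ↦ cdf (gaussianReal m v) 0 + ∫ x in (0 : ℝ)..t, gaussianPDFReal m v x := by
    ext t
    rw [← cdf_gaussianReal_sub_cdf_gaussianReal hv, add_sub_cancel]
  rw [h]
  exact continuous_const.add ((integrable_gaussianPDFReal m v).continuous_primitive 0)

lemma exists_cdf_gaussianReal_eq (hv : v ≠ 0) {p : ℝ} (hp : p ∈ Ioo 0 1) :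
    ∃ t, cdf (gaussianReal m v) t = p :=
  mem_range_of_exists_le_of_exists_ge (continuous_cdf_gaussianReal hv)
    ((tendsto_cdf_atBot _).eventually_le_const hp.1).exists
    ((tendsto_cdf_atTop _).eventually_const_le hp.2).exists

lemma cdf_gaussianReal_self (hv : v ≠ 0) : cdf (gaussianReal m v) m = 1 / 2 := by
  have := nullSingletonClass_gaussianReal (μ := m) hv
  set μ := gaussianReal m v
  -- the reflection `x ↦ 2m - x` preserves `μ` and swaps `Iic m` with `Ici m`
  have hreflect : μ.real (Iic m) = μ.real (Ioi m) := by
    have hmap : μ.map (2 * m - ·) = μ := by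
      rw [gaussianReal_map_const_sub, two_mul, add_sub_cancel_right]
    rw [← measureReal_congr (Ioi_ae_eq_Ici (μ := μ)).symm]
    conv_rhs => rw [← hmap]
    rw [map_measureReal_apply (by fun_prop) measurableSet_Ici]
    congr 1
    ext x; simp [two_mul]
  have htotal : μ.real (Iic m) + μ.real (Ioi m) = 1 := by
    rw [← compl_Iic, measureReal_add_measureReal_compl measurableSet_Iic, probReal_univ]
  rw [cdf_eq_real]
  linarith

lemma cdf_gaussianReal_add_lt (hv : v ≠ 0) {t : ℝ} (ht : 0 < t) :
    cdf (gaussianReal m v) (m + t) < 1 / 2 + t * gaussianPDFReal m v m := by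
  have hlt : ∫ x in m..m + t, gaussianPDFReal m v x < ∫ _ in m..m + t, gaussianPDFReal m v m := by
    refine intervalIntegral.integral_lt_integral_of_continuousOn_of_le_of_exists_lt
      (by linarith) (by rw [gaussianPDFReal_def]; fun_prop) continuousOn_const
      (fun x _ ↦ gaussianPDFReal_le_gaussianPDFReal_self) ⟨m + t, by simp [ht.le], ?_⟩
    exact gaussianPDFReal_lt_gaussianPDFReal_self hv (lt_add_of_pos_right m ht).ne'
  rw [intervalIntegral.integral_const, smul_eq_mul, add_sub_cancel_left,
    ← cdf_gaussianReal_sub_cdf_gaussianReal hv, cdf_gaussianReal_self hv] at hlt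
  linarith

end ProbabilityTheory

lemma gaussianPDFReal_zero_one_zero : gaussianPDFReal 0 1 0 = (√(2 * π))⁻¹ := by
  simp [gaussianPDFReal_def]

lemma stdGaussCDF_stdGaussCDFInv {p : ℝ} (hp : p ∈ Ioo 0 1) :
    stdGaussCDF (stdGaussCDFInv p) = p :=
  Function.invFun_eq (exists_cdf_gaussianReal_eq one_ne_zero hp)

lemma lt_stdGaussCDFInv_iff {p t : ℝ} (hp : p ∈ Ioo 0 1) :
    t < stdGaussCDFInv p ↔ stdGaussCDF t < p := by
  conv_rhs => rw [← stdGaussCDF_stdGaussCDFInv hp]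
  exact (strictMono_cdf_gaussianReal one_ne_zero).lt_iff_lt.symm

lemma stdGaussCDF_lt {t : ℝ} (ht : 0 < t) : stdGaussCDF t < 1 / 2 + t / √(2 * π) := by
  have := cdf_gaussianReal_add_lt (m := 0) one_ne_zero ht
  rwa [zero_add, gaussianPDFReal_zero_one_zero, ← div_eq_mul_inv] at this

theorem radius_dominates_SE (φ σ : ℝ) (hφ : φ ∈ Set.Ioo (1 / 2 : ℝ) 1) (hσ : 0 < σ) :
    Real.sqrt (Real.pi * σ ^ 2 / 2) * (2 * φ - 1) < σ * stdGaussCDFInv φ := by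
  obtain ⟨hφ_gt, hφ_lt⟩ := hφ
  set t := √(π / 2) * (2 * φ - 1)
  have ht : 0 < t := mul_pos (by positivity) (by linarith)
  have hsqrt_two_pi : √(2 * π) = 2 * √(π / 2) := by
    rw [show 2 * π = 2 ^ 2 * (π / 2) by ring, sqrt_mul (by positivity), sqrt_sq zero_le_two]
  have hΦt : stdGaussCDF t < φ := by
    have : t / √(2 * π) = φ - 1 / 2 := by
      rw [hsqrt_two_pi]; field_simp; ring
    linarith [stdGaussCDF_lt ht]
  have hσ_sqrt : √(π * σ ^ 2 / 2) = σ * √(π / 2) := by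
    rw [show π * σ ^ 2 / 2 = σ ^ 2 * (π / 2) by ring, sqrt_mul (by positivity), sqrt_sq hσ.le]
  rw [hσ_sqrt, mul_assoc]
  exact mul_lt_mul_of_pos_left ((lt_stdGaussCDFInv_iff ⟨by linarith, hφ_lt⟩).2 hΦt) hσ
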